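/- The following hold: (1) if (√(1+2c)-1)/√(2c) < R < (1-√(1-2c))/√(2c), then there exists θ_c ∈ (0, π/2) such that γ_R ∩ γ̃_R = {e^{iθ_c}, e^{-iθ_c}, -e^{iθ_c}, -e^{-iθ_c}} (four distinct points on the unit circle) and |G(e^{iθ_c})| = R; (2) if R = (1-√(1-2c))/√(2c) then γ_R ∩ γ̃_R = {i, -i}; (3) if R = (√(1+2c)-1)/√(2c) then γ_R ∩ γ̃_R = {1, -1}. -/

import Mathlib

/-- `c = a/(1+a²)`. -/
noncomputable def cOf (a : ℝ) : ℝ := a / (1 + a ^ 2)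

/-- The branch of the logarithm with argument in `(-π/2, 3π/2]`:
`L(z) = Log(-iz) + iπ/2` where `Log` is the principal branch. -/
noncomputable def Lbr (z : ℂ) : ℂ :=
  Complex.log (-Complex.I * z) + Complex.I * ((Real.pi : ℂ) / 2)

/-- The branch `√(ω² + 2c) = exp((1/2)L(ω + i√(2c)) + (1/2)L(ω - i√(2c)))`. -/
noncomputable def sqBr (a : ℝ) (ω : ℂ) : ℂ :=
  Complex.exp ((1 / 2 : ℂ) * Lbr (ω + Complex.I * (Real.sqrt (2 * cOf a) : ℂ)) +
    (1 / 2 : ℂ) * Lbr (ω - Complex.I * (Real.sqrt (2 * cOf a) : ℂ)))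

/-- `G(ω) = (ω - √(ω² + 2c))/√(2c)`. -/
noncomputable def Gbr (a : ℝ) (ω : ℂ) : ℂ :=
  (ω - sqBr a ω) / (Real.sqrt (2 * cOf a) : ℂ)

/-- The branch cuts `𝒞 = i·((-∞, -1/√(2c)] ∪ [-√(2c), √(2c)] ∪ [1/√(2c), ∞))`. -/
def cuts (a : ℝ) : Set ℂ :=
  {z : ℂ | ∃ t : ℝ, z = Complex.I * (t : ℂ) ∧
    (t ≤ -(1 / Real.sqrt (2 * cOf a)) ∨
      (-Real.sqrt (2 * cOf a) ≤ t ∧ t ≤ Real.sqrt (2 * cOf a)) ∨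
      1 / Real.sqrt (2 * cOf a) ≤ t)}

/-- The ellipse `γ_R = {√(c/2)·(R e^{iθ} - R⁻¹ e^{-iθ}) : θ ∈ ℝ}`. -/
def ellipse (a R : ℝ) : Set ℂ :=
  {z : ℂ | ∃ θ : ℝ, z = (Real.sqrt (cOf a / 2) : ℂ) *
    ((R : ℂ) * Complex.exp (Complex.I * (θ : ℂ)) -
      ((R : ℂ))⁻¹ * Complex.exp (-(Complex.I * (θ : ℂ))))}

/-- `γ̃_R`, the image of `γ_R` under inversion `ω ↦ 1/ω`. -/
def ellipseInv (a R : ℝ) : Set ℂ := {z : ℂ | ∃ ω ∈ ellipse a R, z = ω⁻¹}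

/-!
Writing `s = √(c/2)`, the curve `γ_R` is the ellipse `(x/A)² + (y/B)² = 1` with semi-axes
`A = s(R⁻¹ - R)` and `B = s(R⁻¹ + R)`, so that `B² - A² = 2c`. Its equation is a quadratic
form invariant under conjugation, and `1/z = z̄/|z|²`; hence `z` and `1/z` both lie on it only
if `|z| = 1`, and `γ_R ∩ γ̃_R` is the intersection of the ellipse with the unit circle, given
by `cos² θ = A²(B² - 1)/(B² - A²)`. Both semi-axes decrease in `R`, with `A = 1` at the lower
and `B = 1` at the upper threshold: between them `0 < cos² θ < 1` gives four points, at the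
upper one `cos θ = 0` gives `±i`, at the lower one `cos θ = ±1` gives `±1`.

On `γ_R`, `ω = s(ζ - ζ⁻¹)` with `ζ = R e^{iθ}`, so `ω² + 2c = s²(ζ + ζ⁻¹)²`. On the right
half-plane the chosen branch of the square root has positive real part, which forces it to be
`-s(ζ + ζ⁻¹)`, and then `G(ω) = ζ` has modulus `R`.
-/

open Complex Metric Set
open scoped Pointwise

lemma cOf_pos {a : ℝ} (ha : 0 < a) : 0 < cOf a := by
  unfold cOf; positivity

lemma two_mul_cOf_lt_one {a : ℝ} (ha : 0 < a) (ha1 : a < 1) : 2 * cOf a < 1 := by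
  rw [cOf, ← mul_div_assoc, div_lt_one (by positivity)]
  nlinarith [sq_nonneg (1 - a)]

lemma sqrt_two_mul_eq (x : ℝ) : Real.sqrt (2 * x) = 2 * Real.sqrt (x / 2) := by
  rw [show 2 * x = 2 ^ 2 * (x / 2) by ring, Real.sqrt_mul (by positivity),
    Real.sqrt_sq zero_le_two]

lemma exp_Lbr {w : ℂ} (hw : w ≠ 0) : exp (Lbr w) = w := by
  rw [Lbr, exp_add, exp_log (by simpa using hw), mul_comm I, exp_pi_div_two_mul_I, mul_assoc]
  linear_combination (-w) * I_sq

lemma abs_im_Lbr_lt {w : ℂ} (hw : 0 < w.re) : |(Lbr w).im| < Real.pi / 2 := by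
  have him : (Lbr w).im = arg (-I * w) + Real.pi / 2 := by simp [Lbr, log_im]
  have hneg : arg (-I * w) < 0 := by simpa [arg_neg_iff] using hw
  rw [abs_lt, him]
  constructor <;> linarith [neg_pi_lt_arg (-I * w)]

lemma sqBr_sq {a : ℝ} (ha : 0 ≤ a) {z : ℂ} (hz : 0 < z.re) :
    sqBr a z ^ 2 = z ^ 2 + 2 * cOf a := by
  have ht : ((Real.sqrt (2 * cOf a) : ℝ) : ℂ) ^ 2 = 2 * cOf a := by
    rw [← ofReal_pow, Real.sq_sqrt (by unfold cOf; positivity)]; push_cast; ring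
  have hne : ∀ s : ℝ, z + I * s ≠ 0 := fun s h => by simpa [hz.ne'] using congrArg re h
  have hne' : ∀ s : ℝ, z - I * s ≠ 0 := fun s h => by simpa [hz.ne'] using congrArg re h
  rw [sqBr, sq, ← exp_add, show ∀ x y : ℂ, (1 / 2 * x + 1 / 2 * y) + (1 / 2 * x + 1 / 2 * y) =
    x + y from fun x y => by ring, exp_add, exp_Lbr (hne _), exp_Lbr (hne' _)]
  linear_combination ht - ((Real.sqrt (2 * cOf a) : ℝ) : ℂ) ^ 2 * I_sq

lemma re_sqBr_pos (a : ℝ) {z : ℂ} (hz : 0 < z.re) : 0 < (sqBr a z).re := by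
  have h₁ := abs_im_Lbr_lt (w := z + I * Real.sqrt (2 * cOf a)) (by simpa using hz)
  have h₂ := abs_im_Lbr_lt (w := z - I * Real.sqrt (2 * cOf a)) (by simpa using hz)
  rw [abs_lt] at h₁ h₂
  rw [sqBr, exp_re]
  generalize Lbr _ = L₁ at h₁ ⊢
  generalize Lbr _ = L₂ at h₂ ⊢
  refine mul_pos (Real.exp_pos _) (Real.cos_pos_of_mem_Ioo ⟨?_, ?_⟩) <;> simp <;> linarith

lemma sqBr_eq_of_sq_eq {a : ℝ} (ha : 0 ≤ a) {z v : ℂ} (hz : 0 < z.re)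
    (hv : v ^ 2 = z ^ 2 + 2 * cOf a) (hv0 : 0 < v.re) : sqBr a z = v := by
  rcases sq_eq_sq_iff_eq_or_eq_neg.mp ((sqBr_sq ha hz).trans hv.symm) with h | h
  · exact h
  · have := re_sqBr_pos a hz
    rw [h, neg_re] at this
    linarith

lemma re_add_inv_neg {ζ : ℂ} (h1 : ‖ζ‖ < 1) (hre : 0 < (ζ - ζ⁻¹).re) :
    (ζ + ζ⁻¹).re < 0 := by
  have hζ : ζ ≠ 0 := by rintro rfl; simp at hre
  have hn0 : 0 < normSq ζ := normSq_pos.mpr hζ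
  have hn1 : normSq ζ < 1 := by
    rw [normSq_eq_norm_sq]; exact pow_lt_one₀ (norm_nonneg _) h1 two_ne_zero
  rw [sub_re, inv_re] at hre
  rw [add_re, inv_re]
  have hneg : ζ.re < 0 := by
    by_contra! h
    have : ζ.re ≤ ζ.re / normSq ζ := le_div_self h hn0 hn1.le
    linarith
  have : ζ.re / normSq ζ < 0 := div_neg_of_neg_of_pos hneg hn0
  linarith

lemma Gbr_sqrt_half_mul_sub_inv {a : ℝ} (ha : 0 < a) {ζ : ℂ} (h1 : ‖ζ‖ < 1)
    (hre : 0 < (ζ - ζ⁻¹).re) : Gbr a (Real.sqrt (cOf a / 2) * (ζ - ζ⁻¹)) = ζ := by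
  set s := Real.sqrt (cOf a / 2)
  have hs : 0 < s := Real.sqrt_pos.mpr (by linarith [cOf_pos ha])
  have hs2 : (s : ℂ) ^ 2 = cOf a / 2 := by
    rw [← ofReal_pow, Real.sq_sqrt (by linarith [cOf_pos ha])]; push_cast; ring
  have hζ0 : ζ ≠ 0 := by rintro rfl; simp at hre
  have hζ : ζ * ζ⁻¹ = 1 := mul_inv_cancel₀ hζ0
  have hsqrt : sqBr a (s * (ζ - ζ⁻¹)) = -(s * (ζ + ζ⁻¹)) := by
    refine sqBr_eq_of_sq_eq ha.le (by rw [re_ofReal_mul]; positivity) ?_ ?_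
    · linear_combination (4 * (s : ℂ) ^ 2) * hζ + 4 * hs2
    · rw [neg_re, re_ofReal_mul]
      nlinarith [re_add_inv_neg h1 hre]
  have ht : (Real.sqrt (2 * cOf a) : ℂ) = 2 * s := by rw [sqrt_two_mul_eq]; push_cast; ring
  have h2s : (2 * s : ℂ) ≠ 0 := by exact_mod_cast (mul_pos two_pos hs).ne'
  rw [Gbr, hsqrt, ht, show (s : ℂ) * (ζ - ζ⁻¹) - -(s * (ζ + ζ⁻¹)) = 2 * s * ζ by ring,
    mul_div_cancel_left₀ _ h2s]

lemma norm_Gbr_of_mem_ellipse {a R : ℝ} (ha : 0 < a) (hR0 : 0 < R) (hR1 : R < 1) {z : ℂ}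
    (hz : z ∈ ellipse a R) (hre : 0 < z.re) : ‖Gbr a z‖ = R := by
  obtain ⟨θ, rfl⟩ := hz
  have hζ : ((R : ℂ))⁻¹ * exp (-(I * θ)) = ((R : ℂ) * exp (I * θ))⁻¹ := by
    rw [mul_inv, exp_neg]
  have hnorm : ‖(R : ℂ) * exp (I * θ)‖ = R := by
    rw [norm_mul, mul_comm I, norm_exp_ofReal_mul_I, norm_real, Real.norm_of_nonneg hR0.le, mul_one]
  rw [hζ, re_ofReal_mul] at hre
  rw [hζ, Gbr_sqrt_half_mul_sub_inv ha (hnorm.symm ▸ hR1)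
    (pos_of_mul_pos_right hre (Real.sqrt_nonneg _)), hnorm]

def stdEllipse (A B : ℝ) : Set ℂ := {z | (z.re / A) ^ 2 + (z.im / B) ^ 2 = 1}

lemma stdEllipse_neg_left (A B : ℝ) : stdEllipse (-A) B = stdEllipse A B := by
  simp [stdEllipse, div_neg]

lemma mem_stdEllipse_iff {A B : ℝ} (hA : A ≠ 0) (hB : B ≠ 0) {z : ℂ} :
    z ∈ stdEllipse A B ↔ ∃ θ : ℝ, z = A * Real.cos θ + B * Real.sin θ * I := by
  constructor
  · intro hz
    have hw : ‖(z.re / A : ℝ) + (z.im / B : ℝ) * I‖ = 1 := by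
      rw [norm_def, normSq_add_mul_I, show (z.re / A) ^ 2 + (z.im / B) ^ 2 = 1 from hz,
        Real.sqrt_one]
    obtain ⟨θ, hθ⟩ := (norm_eq_one_iff _).mp hw
    have hcos : Real.cos θ = z.re / A := by simpa using congrArg re hθ
    have hsin : Real.sin θ = z.im / B := by simpa using congrArg im hθ
    refine ⟨θ, Complex.ext ?_ ?_⟩ <;> simp [hcos, hsin] <;> field_simp
  · rintro ⟨θ, rfl⟩
    simp [stdEllipse, hA, hB, -ofReal_cos, -ofReal_sin]

lemma stdEllipse_inter_inv (A B : ℝ) :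
    stdEllipse A B ∩ (stdEllipse A B)⁻¹ = stdEllipse A B ∩ sphere 0 1 := by
  have hinv : ∀ z : ℂ, (z⁻¹.re / A) ^ 2 + (z⁻¹.im / B) ^ 2 =
      ((z.re / A) ^ 2 + (z.im / B) ^ 2) / normSq z ^ 2 := fun z => by
    rw [inv_re, inv_im]; ring
  ext z
  simp only [mem_inter_iff, Set.mem_inv, stdEllipse, Set.mem_ofPred_eq, hinv,
    mem_sphere_zero_iff_norm, norm_def]
  refine and_congr_right fun hz => ?_
  rw [hz, one_div, inv_eq_one, Real.sqrt_eq_one,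
    pow_eq_one_iff_of_nonneg (normSq_nonneg z) two_ne_zero]

lemma stdEllipse_inter_sphere {A B : ℝ} (hA : A ≠ 0) (hB : B ≠ 0) (hAB : A ^ 2 ≠ B ^ 2) :
    stdEllipse A B ∩ sphere 0 1 =
      {z ∈ sphere (0 : ℂ) 1 | z.re ^ 2 = A ^ 2 * (B ^ 2 - 1) / (B ^ 2 - A ^ 2)} := by
  rw [inter_comm]
  ext z
  simp only [mem_inter_iff, stdEllipse, Set.mem_ofPred_eq]
  refine and_congr_right fun hz => ?_
  have h1 : z.re ^ 2 + z.im ^ 2 = 1 := by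
    rw [mem_sphere_zero_iff_norm, norm_def, Real.sqrt_eq_one, normSq_apply] at hz
    linarith
  have hBA : B ^ 2 - A ^ 2 ≠ 0 := sub_ne_zero.mpr hAB.symm
  rw [div_pow, div_pow, eq_div_iff hBA]
  field_simp
  constructor
  · intro h; linear_combination h - A ^ 2 * h1
  · intro h; linear_combination h + A ^ 2 * h1

lemma exp_I_mul_ofReal_eq_mk (θ : ℝ) : exp (I * θ) = ⟨Real.cos θ, Real.sin θ⟩ := by
  apply Complex.ext <;> simp [mul_comm I, exp_ofReal_mul_I_re, exp_ofReal_mul_I_im]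

lemma exp_neg_I_mul_ofReal_eq_mk (θ : ℝ) :
    exp (-(I * θ)) = ⟨Real.cos θ, -Real.sin θ⟩ := by
  rw [← mul_neg, ← ofReal_neg, exp_I_mul_ofReal_eq_mk, Real.cos_neg, Real.sin_neg]

lemma sphere_sep_re_sq_eq_cos_sq (θ : ℝ) :
    {z ∈ sphere (0 : ℂ) 1 | z.re ^ 2 = Real.cos θ ^ 2} =
      {exp (I * θ), exp (-(I * θ)), -exp (I * θ), -exp (-(I * θ))} := by
  rw [exp_I_mul_ofReal_eq_mk, exp_neg_I_mul_ofReal_eq_mk]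
  ext ⟨x, y⟩
  simp only [mem_sphere_zero_iff_norm, norm_def, Real.sqrt_eq_one, normSq_apply,
    mem_insert_iff, mem_singleton_iff, Complex.ext_iff, neg_re, neg_im]
  have hθ := Real.cos_sq_add_sin_sq θ
  constructor
  · rintro ⟨h1, hx⟩
    have hy : y ^ 2 = Real.sin θ ^ 2 := by linear_combination h1 - hx - hθ
    rcases sq_eq_sq_iff_eq_or_eq_neg.mp hx with rfl | rfl <;>
      rcases sq_eq_sq_iff_eq_or_eq_neg.mp hy with rfl | rfl <;> simp
  · rintro (⟨rfl, rfl⟩ | ⟨rfl, rfl⟩ | ⟨rfl, rfl⟩ | ⟨rfl, rfl⟩) <;>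
      exact ⟨by linear_combination hθ, by ring⟩

lemma ncard_exp_quadruple {θ : ℝ} (hcos : Real.cos θ ≠ 0) (hsin : Real.sin θ ≠ 0) :
    ({exp (I * θ), exp (-(I * θ)), -exp (I * θ), -exp (-(I * θ))} : Set ℂ).ncard = 4 := by
  rw [exp_I_mul_ofReal_eq_mk, exp_neg_I_mul_ofReal_eq_mk, ncard_insert_of_notMem,
    ncard_insert_of_notMem, ncard_pair] <;>
    simp [Complex.ext_iff, CharZero.eq_neg_self_iff, hcos, hsin]

noncomputable def semiAxisRe (a R : ℝ) : ℝ := Real.sqrt (cOf a / 2) * (R⁻¹ - R)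

noncomputable def semiAxisIm (a R : ℝ) : ℝ := Real.sqrt (cOf a / 2) * (R⁻¹ + R)

lemma semiAxisRe_pos {a R : ℝ} (ha : 0 < a) (hR0 : 0 < R) (hR1 : R < 1) : 0 < semiAxisRe a R :=
  mul_pos (Real.sqrt_pos.mpr (by linarith [cOf_pos ha]))
    (sub_pos.mpr (hR1.trans (one_lt_inv₀ hR0 |>.mpr hR1)))

lemma semiAxisIm_pos {a R : ℝ} (ha : 0 < a) (hR0 : 0 < R) : 0 < semiAxisIm a R :=
  mul_pos (Real.sqrt_pos.mpr (by linarith [cOf_pos ha])) (by positivity)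

lemma semiAxisIm_sq_sub_semiAxisRe_sq {a R : ℝ} (ha : 0 ≤ a) (hR : R ≠ 0) :
    semiAxisIm a R ^ 2 - semiAxisRe a R ^ 2 = 2 * cOf a := by
  have hs := Real.sq_sqrt (show 0 ≤ cOf a / 2 by unfold cOf; positivity)
  rw [semiAxisIm, semiAxisRe]
  linear_combination (4 * R⁻¹ * R) * hs + 2 * cOf a * mul_inv_cancel₀ hR

lemma ellipse_eq_stdEllipse {a R : ℝ} (ha : 0 < a) (hR0 : 0 < R) (hR1 : R < 1) :
    ellipse a R = stdEllipse (semiAxisRe a R) (semiAxisIm a R) := by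
  ext z
  rw [← stdEllipse_neg_left, mem_stdEllipse_iff (neg_ne_zero.mpr (semiAxisRe_pos ha hR0 hR1).ne')
    (semiAxisIm_pos ha hR0).ne']
  refine exists_congr fun θ => Eq.congr_right ?_
  rw [mul_comm I, exp_mul_I, ← neg_mul, exp_mul_I, cos_neg, sin_neg, semiAxisRe, semiAxisIm]
  push_cast
  ring

lemma ellipseInv_eq_inv (a R : ℝ) : ellipseInv a R = (ellipse a R)⁻¹ := by
  ext z
  constructor
  · rintro ⟨ω, hω, rfl⟩
    rwa [Set.mem_inv, inv_inv]
  · exact fun h => ⟨z⁻¹, h, (inv_inv z).symm⟩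

lemma ellipse_inter_ellipseInv {a R : ℝ} (ha : 0 < a) (hR0 : 0 < R) (hR1 : R < 1) :
    ellipse a R ∩ ellipseInv a R = {z ∈ sphere (0 : ℂ) 1 |
      z.re ^ 2 = semiAxisRe a R ^ 2 * (semiAxisIm a R ^ 2 - 1) / (2 * cOf a)} := by
  have hBA := semiAxisIm_sq_sub_semiAxisRe_sq ha.le hR0.ne'
  rw [ellipseInv_eq_inv, ellipse_eq_stdEllipse ha hR0 hR1, stdEllipse_inter_inv,
    stdEllipse_inter_sphere (semiAxisRe_pos ha hR0 hR1).ne' (semiAxisIm_pos ha hR0).ne', hBA]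
  linarith [cOf_pos ha]

noncomputable def rMin (a : ℝ) : ℝ := (Real.sqrt (1 + 2 * cOf a) - 1) / Real.sqrt (2 * cOf a)

noncomputable def rMax (a : ℝ) : ℝ := (1 - Real.sqrt (1 - 2 * cOf a)) / Real.sqrt (2 * cOf a)

lemma semiAxisRe_strictAntiOn {a : ℝ} (ha : 0 < a) : StrictAntiOn (semiAxisRe a) (Ioi 0) := by
  intro x hx y hy hxy
  have hinv : y⁻¹ < x⁻¹ := (inv_lt_inv₀ hy hx).mpr hxy
  exact mul_lt_mul_of_pos_left (by linarith) (Real.sqrt_pos.mpr (by linarith [cOf_pos ha]))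

lemma semiAxisIm_strictAntiOn {a : ℝ} (ha : 0 < a) : StrictAntiOn (semiAxisIm a) (Ioc 0 1) := by
  rintro x ⟨hx0, -⟩ y ⟨hy0, hy1⟩ hxy
  have hxy1 : x * y < 1 := by nlinarith
  have hdiff : x⁻¹ + x - (y⁻¹ + y) = (y - x) * (1 - x * y) / (x * y) := by
    field_simp; ring
  have hpos : 0 < x⁻¹ + x - (y⁻¹ + y) := by
    rw [hdiff]; exact div_pos (mul_pos (by linarith) (by linarith)) (by positivity)
  exact mul_lt_mul_of_pos_left (by linarith) (Real.sqrt_pos.mpr (by linarith [cOf_pos ha]))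

lemma rMin_mem_Ioo {a : ℝ} (ha : 0 < a) : rMin a ∈ Ioo 0 1 := by
  have hc := cOf_pos ha
  set t := Real.sqrt (2 * cOf a)
  set p := Real.sqrt (1 + 2 * cOf a)
  have ht : 0 < t := Real.sqrt_pos.mpr (by linarith)
  have hp : 1 < p := by rw [Real.lt_sqrt zero_le_one]; linarith
  have hpt : p ^ 2 = 1 + t ^ 2 := by
    rw [Real.sq_sqrt (by linarith), Real.sq_sqrt (by linarith)]
  refine ⟨div_pos (by linarith) ht, (div_lt_one ht).mpr ?_⟩
  nlinarith

lemma rMax_mem_Ioo {a : ℝ} (ha : 0 < a) (ha1 : a < 1) : rMax a ∈ Ioo 0 1 := by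
  have hc := cOf_pos ha
  have hc1 := two_mul_cOf_lt_one ha ha1
  set t := Real.sqrt (2 * cOf a)
  set q := Real.sqrt (1 - 2 * cOf a)
  have ht : 0 < t := Real.sqrt_pos.mpr (by linarith)
  have hq : 0 < q := Real.sqrt_pos.mpr (by linarith)
  have htq : t ^ 2 + q ^ 2 = 1 := by
    rw [Real.sq_sqrt (by linarith), Real.sq_sqrt (by linarith)]; ring
  have hq1 : q < 1 := by rw [Real.sqrt_lt' one_pos]; linarith
  refine ⟨div_pos (by linarith) ht, (div_lt_one ht).mpr ?_⟩
  nlinarith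

lemma semiAxisRe_rMin {a : ℝ} (ha : 0 < a) : semiAxisRe a (rMin a) = 1 := by
  have hc := cOf_pos ha
  rw [semiAxisRe, rMin, ← mul_div_cancel_left₀ (Real.sqrt (cOf a / 2)) two_ne_zero,
    ← sqrt_two_mul_eq]
  set t := Real.sqrt (2 * cOf a)
  set p := Real.sqrt (1 + 2 * cOf a)
  have ht : 0 < t := Real.sqrt_pos.mpr (by linarith)
  have hp : p - 1 ≠ 0 := by
    refine sub_ne_zero.mpr (ne_of_gt ?_); rw [Real.lt_sqrt zero_le_one]; linarith
  have hpt : p ^ 2 = 1 + t ^ 2 := by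
    rw [Real.sq_sqrt (by linarith), Real.sq_sqrt (by linarith)]
  field_simp
  linear_combination -hpt

lemma semiAxisIm_rMax {a : ℝ} (ha : 0 < a) (ha1 : a < 1) : semiAxisIm a (rMax a) = 1 := by
  have hc := cOf_pos ha
  have hc1 := two_mul_cOf_lt_one ha ha1
  rw [semiAxisIm, rMax, ← mul_div_cancel_left₀ (Real.sqrt (cOf a / 2)) two_ne_zero,
    ← sqrt_two_mul_eq]
  set t := Real.sqrt (2 * cOf a)
  set q := Real.sqrt (1 - 2 * cOf a)
  have ht : 0 < t := Real.sqrt_pos.mpr (by linarith)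
  have hq : 1 - q ≠ 0 := by
    refine sub_ne_zero.mpr (ne_of_gt ?_); rw [Real.sqrt_lt' one_pos]; linarith
  have htq : t ^ 2 + q ^ 2 = 1 := by
    rw [Real.sq_sqrt (by linarith), Real.sq_sqrt (by linarith)]; ring
  field_simp
  linear_combination htq

lemma exists_cos_sq_eq {ρ : ℝ} (h0 : 0 < ρ) (h1 : ρ < 1) :
    ∃ θ : ℝ, 0 < θ ∧ θ < Real.pi / 2 ∧ Real.cos θ ^ 2 = ρ := by
  have hs : Real.sqrt ρ < 1 := by rw [Real.sqrt_lt' one_pos]; linarith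
  refine ⟨Real.arccos (Real.sqrt ρ), Real.arccos_pos.mpr hs,
    Real.arccos_lt_pi_div_two.mpr (Real.sqrt_pos.mpr h0), ?_⟩
  rw [Real.cos_arccos (by linarith [Real.sqrt_nonneg ρ]) hs.le, Real.sq_sqrt h0.le]

lemma ellipse_inter_ellipseInv_rMax {a : ℝ} (ha : 0 < a) (ha1 : a < 1) :
    ellipse a (rMax a) ∩ ellipseInv a (rMax a) = {I, -I} := by
  obtain ⟨hR0, hR1⟩ := rMax_mem_Ioo ha ha1
  rw [ellipse_inter_ellipseInv ha hR0 hR1, semiAxisIm_rMax ha ha1,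
    show semiAxisRe a (rMax a) ^ 2 * (1 ^ 2 - 1) / (2 * cOf a) = Real.cos (Real.pi / 2) ^ 2 by
      simp,
    sphere_sep_re_sq_eq_cos_sq]
  push_cast
  simp [mul_comm I, exp_neg, exp_pi_div_two_mul_I, pair_comm]

lemma ellipse_inter_ellipseInv_rMin {a : ℝ} (ha : 0 < a) :
    ellipse a (rMin a) ∩ ellipseInv a (rMin a) = {1, -1} := by
  obtain ⟨hR0, hR1⟩ := rMin_mem_Ioo ha
  have hA := semiAxisRe_rMin ha
  have hB : semiAxisIm a (rMin a) ^ 2 - 1 = 2 * cOf a := by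
    rw [← semiAxisIm_sq_sub_semiAxisRe_sq ha.le hR0.ne', hA, one_pow]
  rw [ellipse_inter_ellipseInv ha hR0 hR1, hA, hB, one_pow, one_mul,
    div_self (by linarith [cOf_pos ha])]
  simpa using sphere_sep_re_sq_eq_cos_sq 0

/-- (1) If `(√(1+2c)-1)/√(2c) < R < (1-√(1-2c))/√(2c)`, then there exists
`θ_c ∈ (0, π/2)` such that `γ_R ∩ γ̃_R = {e^{iθ_c}, e^{-iθ_c}, -e^{iθ_c}, -e^{-iθ_c}}`
(four distinct points on the unit circle) and `|G(e^{iθ_c})| = R`;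
(2) if `R = (1-√(1-2c))/√(2c)` then `γ_R ∩ γ̃_R = {i, -i}`;
(3) if `R = (√(1+2c)-1)/√(2c)` then `γ_R ∩ γ̃_R = {1, -1}`. -/
theorem statement15 (a : ℝ) (ha0 : 0 < a) (ha1 : a < 1) (R : ℝ)
    (hR0 : 0 < R) (hR1 : R < 1) :
    (((Real.sqrt (1 + 2 * cOf a) - 1) / Real.sqrt (2 * cOf a) < R ∧
        R < (1 - Real.sqrt (1 - 2 * cOf a)) / Real.sqrt (2 * cOf a)) →
      ∃ θc : ℝ, 0 < θc ∧ θc < Real.pi / 2 ∧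
        ellipse a R ∩ ellipseInv a R =
          {Complex.exp (Complex.I * (θc : ℂ)), Complex.exp (-(Complex.I * (θc : ℂ))),
            -Complex.exp (Complex.I * (θc : ℂ)), -Complex.exp (-(Complex.I * (θc : ℂ)))} ∧
        (ellipse a R ∩ ellipseInv a R).ncard = 4 ∧
        ‖Gbr a (Complex.exp (Complex.I * (θc : ℂ)))‖ = R) ∧
    (R = (1 - Real.sqrt (1 - 2 * cOf a)) / Real.sqrt (2 * cOf a) →
      ellipse a R ∩ ellipseInv a R = {Complex.I, -Complex.I}) ∧
    (R = (Real.sqrt (1 + 2 * cOf a) - 1) / Real.sqrt (2 * cOf a) →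
      ellipse a R ∩ ellipseInv a R = {1, -1}) := by
  refine ⟨fun ⟨hlo, hhi⟩ => ?_, fun h => h ▸ ellipse_inter_ellipseInv_rMax ha0 ha1,
    fun h => h ▸ ellipse_inter_ellipseInv_rMin ha0⟩
  have hA0 := semiAxisRe_pos ha0 hR0 hR1
  have hA1 : semiAxisRe a R < 1 :=
    semiAxisRe_rMin ha0 ▸ semiAxisRe_strictAntiOn ha0 (rMin_mem_Ioo ha0).1 hR0 hlo
  have hB1 : 1 < semiAxisIm a R := semiAxisIm_rMax ha0 ha1 ▸ semiAxisIm_strictAntiOn ha0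
    ⟨hR0, hR1.le⟩ (Ioo_subset_Ioc_self (rMax_mem_Ioo ha0 ha1)) hhi
  have hBA := semiAxisIm_sq_sub_semiAxisRe_sq ha0.le hR0.ne'
  have hc := cOf_pos ha0
  have hAB : semiAxisRe a R ^ 2 * semiAxisIm a R ^ 2 < 1 * semiAxisIm a R ^ 2 :=
    mul_lt_mul_of_pos_right (by nlinarith) (by positivity)
  obtain ⟨θ, hθ0, hθ1, hcos⟩ := exists_cos_sq_eq
    (ρ := semiAxisRe a R ^ 2 * (semiAxisIm a R ^ 2 - 1) / (2 * cOf a))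
    (div_pos (mul_pos (by positivity) (by nlinarith)) (by positivity))
    (by rw [div_lt_one (by positivity)]; linarith)
  have hset := (ellipse_inter_ellipseInv ha0 hR0 hR1).trans (hcos ▸ sphere_sep_re_sq_eq_cos_sq θ)
  have hcos0 : 0 < Real.cos θ := Real.cos_pos_of_mem_Ioo ⟨by linarith, hθ1⟩
  have hsin0 : 0 < Real.sin θ := Real.sin_pos_of_pos_of_lt_pi hθ0 (by linarith)
  have hmem : exp (I * θ) ∈ ellipse a R ∩ ellipseInv a R := hset ▸ mem_insert _ _
  refine ⟨θ, hθ0, hθ1, hset, hset ▸ ncard_exp_quadruple hcos0.ne' hsin0.ne', ?_⟩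
  exact norm_Gbr_of_mem_ellipse ha0 hR0 hR1 hmem.1 (by rwa [exp_I_mul_ofReal_eq_mk])
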